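/- Consider the alternating projection iteration in ℝ²: with A = (2, 0), L_{k+1} = P_B((L_k − S_k + A)/2) and S_{k+1} = P_B((S_k − L_k + A)/2), starting from L_0 = (√2, √2) and S_0 = (√2, −√2). Then the iterates do not converge linearly (geometrically) to the solution: for every c ∈ (0, 1) and every C > 0 there exists k ≥ 1 such that ‖L_k − (1, 0)‖ > C·c^k. -/

import Mathlib

/-!
With `A = (2, 0)`, the iteration preserves the shape `L = (x, y)`, `S = (x, -y)`: then
`(L - S + A)/2 = (1, y)` and `(S - L + A)/2 = (1, -y)`, whose projections onto the ball are
`(1, ±y)/√(1 + y²)`. Hence `y ↦ y/√(1 + y²)`, i.e. `1/y² ↦ 1/y² + 1`, and since `1/y₀² = 1/2`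
we get `y_k = 1/√(k + 1/2)`. The error `‖L_k - (1, 0)‖ ≥ y_k ≥ 1/(k + 1)` decays only like
`1/√k`, which beats any geometric sequence `C cᵏ`.
-/

/-- The point `(a, b)` of `ℝ²` (with the Euclidean norm). -/
noncomputable def vec2 (a b : ℝ) : EuclideanSpace ℝ (Fin 2) := WithLp.toLp 2 ![a, b]

/-- Metric projection onto the closed unit ball of `ℝ²`:
`P_B(x) = x` if `‖x‖ ≤ 1` and `P_B(x) = x/‖x‖` otherwise. -/
noncomputable def ballProj (x : EuclideanSpace ℝ (Fin 2)) : EuclideanSpace ℝ (Fin 2) :=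
  if ‖x‖ ≤ 1 then x else ‖x‖⁻¹ • x

open Filter

lemma vec2_add (a b c d : ℝ) : vec2 a b + vec2 c d = vec2 (a + c) (b + d) := by
  ext i; fin_cases i <;> simp [vec2]

lemma vec2_sub (a b c d : ℝ) : vec2 a b - vec2 c d = vec2 (a - c) (b - d) := by
  ext i; fin_cases i <;> simp [vec2]

lemma vec2_smul (r a b : ℝ) : r • vec2 a b = vec2 (r * a) (r * b) := by
  ext i; fin_cases i <;> simp [vec2]

lemma norm_vec2 (a b : ℝ) : ‖vec2 a b‖ = √(a ^ 2 + b ^ 2) := by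
  simp [EuclideanSpace.norm_eq, vec2, Fin.sum_univ_two, sq_abs]

lemma abs_le_norm_vec2 (a b : ℝ) : |b| ≤ ‖vec2 a b‖ := by
  rw [norm_vec2, ← Real.sqrt_sq_eq_abs]
  exact Real.sqrt_le_sqrt (by nlinarith [sq_nonneg a])

lemma ballProj_of_one_lt_norm {x : EuclideanSpace ℝ (Fin 2)} (hx : 1 < ‖x‖) :
    ballProj x = ‖x‖⁻¹ • x :=
  if_neg hx.not_ge

lemma ballProj_vec2_one {y : ℝ} (hy : y ≠ 0) :
    ballProj (vec2 1 y) = vec2 (√(1 + y ^ 2))⁻¹ ((√(1 + y ^ 2))⁻¹ * y) := by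
  have hnorm : ‖vec2 1 y‖ = √(1 + y ^ 2) := by rw [norm_vec2, one_pow]
  have hlt : 1 < ‖vec2 1 y‖ := by
    rw [hnorm, Real.lt_sqrt zero_le_one, one_pow]
    exact lt_add_of_pos_right 1 (by positivity)
  rw [ballProj_of_one_lt_norm hlt, hnorm, vec2_smul, mul_one]

lemma inv_sqrt_mul_inv_sqrt_one_add_sq {s : ℝ} (hs : 0 < s) :
    (√(1 + (√s)⁻¹ ^ 2))⁻¹ * (√s)⁻¹ = (√(s + 1))⁻¹ := by
  have h1 : 0 < √s := Real.sqrt_pos.2 hs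
  have h2 : 0 < √(s + 1) := Real.sqrt_pos.2 (by linarith)
  rw [inv_pow, Real.sq_sqrt hs.le, show 1 + s⁻¹ = (s + 1) / s by field_simp,
    Real.sqrt_div (by linarith)]
  field_simp

noncomputable def apHeight (k : ℕ) : ℝ := (√(k + 1 / 2))⁻¹

lemma apHeight_pos (k : ℕ) : 0 < apHeight k :=
  inv_pos.2 (Real.sqrt_pos.2 (by positivity))

lemma apHeight_zero : apHeight 0 = √2 := by
  rw [apHeight, Nat.cast_zero, zero_add, one_div, Real.sqrt_inv, inv_inv]

lemma apHeight_succ (k : ℕ) :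
    (√(1 + apHeight k ^ 2))⁻¹ * apHeight k = apHeight (k + 1) := by
  rw [apHeight, inv_sqrt_mul_inv_sqrt_one_add_sq (by positivity), apHeight]
  push_cast
  ring_nf

lemma inv_succ_le_apHeight (k : ℕ) : ((k : ℝ) + 1)⁻¹ ≤ apHeight k := by
  apply inv_anti₀ (Real.sqrt_pos.2 (by positivity))
  rw [Real.sqrt_le_left (by positivity)]
  nlinarith

lemma ballProj_half_smul_sub_add {x y : ℝ} (hy : y ≠ 0) :
    ballProj ((1 / 2 : ℝ) • (vec2 x y - vec2 x (-y) + vec2 2 0)) =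
      vec2 (√(1 + y ^ 2))⁻¹ ((√(1 + y ^ 2))⁻¹ * y) := by
  have hmid : (1 / 2 : ℝ) • (vec2 x y - vec2 x (-y) + vec2 2 0) = vec2 1 y := by
    rw [vec2_sub, vec2_add, vec2_smul]
    congr 1 <;> ring
  rw [hmid, ballProj_vec2_one hy]

lemma exists_iterates_eq_vec2 (L S : ℕ → EuclideanSpace ℝ (Fin 2))
    (hL0 : L 0 = vec2 (√2) (√2)) (hS0 : S 0 = vec2 (√2) (-√2))
    (hLrec : ∀ k : ℕ, L (k + 1) = ballProj ((1 / 2 : ℝ) • (L k - S k + vec2 2 0)))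
    (hSrec : ∀ k : ℕ, S (k + 1) = ballProj ((1 / 2 : ℝ) • (S k - L k + vec2 2 0))) (k : ℕ) :
    ∃ x, L k = vec2 x (apHeight k) ∧ S k = vec2 x (-apHeight k) := by
  induction k with
  | zero => exact ⟨√2, by rw [hL0, apHeight_zero], by rw [hS0, apHeight_zero]⟩
  | succ k ih =>
    obtain ⟨x, hL, hS⟩ := ih
    have hy := (apHeight_pos k).ne'
    refine ⟨(√(1 + apHeight k ^ 2))⁻¹, ?_, ?_⟩
    · rw [hLrec, hL, hS, ballProj_half_smul_sub_add hy, apHeight_succ]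
    · rw [hSrec, hL, hS, show vec2 x (apHeight k) = vec2 x (-(-apHeight k)) by rw [neg_neg],
        ballProj_half_smul_sub_add (neg_ne_zero.2 hy), neg_sq, mul_neg, apHeight_succ]

lemma eventually_mul_pow_lt_inv_succ {c : ℝ} (hc : |c| < 1) (C : ℝ) :
    ∀ᶠ k : ℕ in atTop, C * c ^ k < ((k : ℝ) + 1)⁻¹ := by
  have hlim : Tendsto (fun k : ℕ => C * ((k : ℝ) ^ 1 * c ^ k + c ^ k)) atTop (nhds 0) := by
    simpa using ((tendsto_pow_const_mul_const_pow_of_abs_lt_one 1 hc).add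
      (tendsto_pow_atTop_nhds_zero_of_abs_lt_one hc)).const_mul C
  filter_upwards [hlim.eventually (gt_mem_nhds one_pos)] with k hk
  rw [inv_eq_one_div, lt_div_iff₀ (by positivity)]
  linarith [show C * c ^ k * ((k : ℝ) + 1) = C * ((k : ℝ) ^ 1 * c ^ k + c ^ k) by ring]

/-- The alternating projection iterates for the feasibility problem `‖L‖ ≤ 1`, `‖S‖ ≤ 1`,
`L + S = (2,0)` started from `L₀ = (√2, √2)`, `S₀ = (√2, −√2)` do not converge linearly to
the solution `(1,0)`: for every `c ∈ (0,1)` and `C > 0` there is `k ≥ 1` with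
`‖L_k − (1,0)‖ > C·cᵏ`. -/
theorem stmt_7 (L S : ℕ → EuclideanSpace ℝ (Fin 2))
    (hL0 : L 0 = vec2 (Real.sqrt 2) (Real.sqrt 2))
    (hS0 : S 0 = vec2 (Real.sqrt 2) (-Real.sqrt 2))
    (hLrec : ∀ k : ℕ, L (k + 1) = ballProj ((1 / 2 : ℝ) • (L k - S k + vec2 2 0)))
    (hSrec : ∀ k : ℕ, S (k + 1) = ballProj ((1 / 2 : ℝ) • (S k - L k + vec2 2 0))) :
    ∀ c : ℝ, c ∈ Set.Ioo (0 : ℝ) 1 → ∀ C : ℝ, 0 < C →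
      ∃ k : ℕ, 1 ≤ k ∧ C * c ^ k < ‖L k - vec2 1 0‖ := by
  rintro c ⟨hc0, hc1⟩ C -
  have hc : |c| < 1 := by rwa [abs_of_pos hc0]
  obtain ⟨k, hCk, hk⟩ :=
    ((eventually_mul_pow_lt_inv_succ hc C).and (eventually_ge_atTop 1)).exists
  obtain ⟨x, hL, -⟩ := exists_iterates_eq_vec2 L S hL0 hS0 hLrec hSrec k
  refine ⟨k, hk, ?_⟩
  calc C * c ^ k < ((k : ℝ) + 1)⁻¹ := hCk
    _ ≤ apHeight k := inv_succ_le_apHeight k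
    _ = |apHeight k| := (abs_of_pos (apHeight_pos k)).symm
    _ ≤ ‖L k - vec2 1 0‖ := by
      rw [hL, vec2_sub, sub_zero]
      exact abs_le_norm_vec2 (x - 1) (apHeight k)
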